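/- arXiv:1209.5955 — 2 statements merged into one kernel-verified Lean document; each statement's English description precedes it below -/
import Mathlib

section
/- The Hermite operator eigenvalue relation: the functions ψ_{2j,k}(x) = L_j^{m/2+k-1}(|x|²) M_k(x) e^{-|x|²/2} and ψ_{2j+1,k}(x) = L_j^{m/2+k}(|x|²) x M_k(x) e^{-|x|²/2} satisfy H ψ_{2j,k} = (2j+k) ψ_{2j,k} and H ψ_{2j+1,k} = (2j+1+k) ψ_{2j+1,k}, where H = (1/2)(-Δ + |x|² - m). -/
/-- Partial derivative `∂_{x_j}`. -/
noncomputable def pd {m : ℕ} {A : Type*} [NormedAddCommGroup A] [NormedSpace ℝ A]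
    (j : Fin m) (f : EuclideanSpace ℝ (Fin m) → A) (x : EuclideanSpace ℝ (Fin m)) : A :=
  fderiv ℝ f x (EuclideanSpace.single j 1)

/-- Generalized Laguerre polynomial `L_n^ν(t)`. -/
noncomputable def lagR (ν : ℝ) (n : ℕ) (t : ℝ) : ℝ :=
  ∑ j ∈ Finset.range (n + 1),
    (-1 : ℝ) ^ j * Real.Gamma ((n : ℝ) + ν + 1) /
      (Real.Gamma ((j : ℝ) + ν + 1) * (Nat.factorial (n - j)) * (Nat.factorial j)) * t ^ j

noncomputable def lc (ν : ℝ) (n i : ℕ) : ℝ :=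
  (-1 : ℝ) ^ i * Real.Gamma ((n : ℝ) + ν + 1) /
    (Real.Gamma ((i : ℝ) + ν + 1) * (Nat.factorial (n - i)) * (Nat.factorial i))

lemma lagR_eq (ν : ℝ) (n : ℕ) (t : ℝ) :
    lagR ν n t = ∑ i ∈ Finset.range (n + 1), lc ν n i * t ^ i := rfl

lemma lc_rec (ν : ℝ) (hν : -1 ≤ ν) (n i : ℕ) (hi : i < n) :
    ((i : ℝ) + 1) * ((i : ℝ) + ν + 1) * lc ν n (i + 1) = ((i : ℝ) - n) * lc ν n i := by
  obtain ⟨a, ha⟩ : ∃ a, n = (i + 1) + a := le_iff_exists_add.mp hi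
  subst ha
  rcases eq_or_ne ((i : ℝ) + ν + 1) 0 with h0 | h0
  · have hg : Real.Gamma ((i : ℝ) + ν + 1) = 0 := by rw [h0]; exact Real.Gamma_zero
    rw [h0]
    simp [lc, hg]
  · have hpos : 0 < (i : ℝ) + ν + 1 := by
      rcases lt_or_eq_of_le (by linarith [Nat.cast_nonneg (α := ℝ) i] : (0:ℝ) ≤ (i:ℝ) + ν + 1) with h | h
      · exact h
      · exact absurd h.symm h0
    have hΓ : Real.Gamma (((i : ℝ) + 1) + ν + 1) = ((i : ℝ) + ν + 1) * Real.Gamma ((i : ℝ) + ν + 1) := by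
      rw [show ((i : ℝ) + 1) + ν + 1 = ((i : ℝ) + ν + 1) + 1 by ring]
      exact Real.Gamma_add_one h0
    have hΓne : Real.Gamma ((i : ℝ) + ν + 1) ≠ 0 := ne_of_gt (Real.Gamma_pos_of_pos hpos)
    have h1 : (i + 1 + a) - (i + 1) = a := by omega
    have h2 : (i + 1 + a) - i = a + 1 := by omega
    unfold lc
    rw [h1, h2]
    push_cast [hΓ, Nat.factorial_succ, pow_succ]
    have hfa : ((a.factorial : ℝ)) ≠ 0 := Nat.cast_ne_zero.mpr (Nat.factorial_ne_zero a)
    have hfi : ((i.factorial : ℝ)) ≠ 0 := Nat.cast_ne_zero.mpr (Nat.factorial_ne_zero i)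
    field_simp
    ring

noncomputable def lagD (ν : ℝ) (n : ℕ) (t : ℝ) : ℝ :=
  ∑ i ∈ Finset.range (n + 1), lc ν n i * ((i : ℝ) * t ^ (i - 1))

noncomputable def lagD2 (ν : ℝ) (n : ℕ) (t : ℝ) : ℝ :=
  ∑ i ∈ Finset.range (n + 1), lc ν n i * ((i : ℝ) * (((i : ℝ) - 1) * t ^ (i - 2)))

lemma hasDerivAt_lagR (ν : ℝ) (n : ℕ) (t : ℝ) :
    HasDerivAt (lagR ν n) (lagD ν n t) t := by
  have : ∀ s : ℝ, lagR ν n s = ∑ i ∈ Finset.range (n + 1), lc ν n i * s ^ i :=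
    fun s => lagR_eq ν n s
  rw [funext this]
  exact HasDerivAt.fun_sum fun i _ => (hasDerivAt_pow i t).const_mul (lc ν n i)

lemma hasDerivAt_lagD (ν : ℝ) (n : ℕ) (t : ℝ) :
    HasDerivAt (lagD ν n) (lagD2 ν n t) t := by
  unfold lagD lagD2
  refine HasDerivAt.fun_sum fun i _ => ?_
  rcases Nat.eq_zero_or_pos i with rfl | hi
  · simpa using (hasDerivAt_const t ((0:ℝ)))
  · have h := (hasDerivAt_pow (i - 1) t).const_mul (lc ν n i * (i : ℝ))
    have hcast : ((i - 1 : ℕ) : ℝ) = (i : ℝ) - 1 := by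
      have : 1 ≤ i := hi
      push_cast [this]; ring
    have hexp : (i - 1) - 1 = i - 2 := by omega
    simp only [hcast, hexp] at h
    have hf : (fun s : ℝ => lc ν n i * ((i : ℝ) * s ^ (i - 1))) = fun y => lc ν n i * ↑i * y ^ (i - 1) := by
      funext s; ring
    rw [hf]; exact h.congr_deriv (by ring)

lemma lag_ode (ν : ℝ) (hν : -1 ≤ ν) (n : ℕ) (t : ℝ) :
    t * lagD2 ν n t + (ν + 1 - t) * lagD ν n t + (n : ℝ) * lagR ν n t = 0 := by
  have h1 : t * lagD2 ν n t + (ν + 1) * lagD ν n t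
      = ∑ i ∈ Finset.range n, (((i : ℝ) + 1) * ((i : ℝ) + ν + 1) * lc ν n (i + 1)) * t ^ i := by
    unfold lagD lagD2
    rw [Finset.mul_sum, Finset.mul_sum, ← Finset.sum_add_distrib, Finset.sum_range_succ']
    simp only [Nat.cast_zero, zero_mul, mul_zero, add_zero, neg_zero, zero_add]
    refine Finset.sum_congr rfl fun i _ => ?_
    rcases Nat.eq_zero_or_pos i with rfl | hi
    · norm_num
    · obtain ⟨i', rfl⟩ : ∃ i', i = i' + 1 := ⟨i - 1, by omega⟩
      have e1 : (i' + 1 + 1) - 2 = i' := by omega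
      have e2 : (i' + 1 + 1) - 1 = i' + 1 := by omega
      rw [e1, e2]
      push_cast
      ring
  have h2 : (-t) * lagD ν n t + (n : ℝ) * lagR ν n t
      = ∑ i ∈ Finset.range n, (((n : ℝ) - i) * lc ν n i) * t ^ i := by
    unfold lagD
    rw [lagR_eq, Finset.mul_sum, Finset.mul_sum, ← Finset.sum_add_distrib,
      Finset.sum_range_succ]
    have hlast : (-t) * (lc ν n n * ((n : ℝ) * t ^ (n - 1))) + (n : ℝ) * (lc ν n n * t ^ n)
        = 0 := by
      rcases Nat.eq_zero_or_pos n with rfl | hn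
      · simp
      · obtain ⟨n', rfl⟩ : ∃ n', n = n' + 1 := ⟨n - 1, by omega⟩
        have e2 : (n' + 1) - 1 = n' := by omega
        rw [e2, pow_succ]
        push_cast
        ring
    rw [hlast, add_zero]
    refine Finset.sum_congr rfl fun i hi => ?_
    rcases Nat.eq_zero_or_pos i with rfl | hpos
    · simp
    · obtain ⟨i', rfl⟩ : ∃ i', i = i' + 1 := ⟨i - 1, by omega⟩
      have e2 : (i' + 1) - 1 = i' := by omega
      rw [e2, pow_succ]
      push_cast
      ring
  have h3 : t * lagD2 ν n t + (ν + 1 - t) * lagD ν n t + (n : ℝ) * lagR ν n t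
      = (t * lagD2 ν n t + (ν + 1) * lagD ν n t) + ((-t) * lagD ν n t + (n : ℝ) * lagR ν n t) := by
    ring
  rw [h3, h1, h2, ← Finset.sum_add_distrib]
  refine Finset.sum_eq_zero fun i hi => ?_
  have := lc_rec ν hν n i (Finset.mem_range.mp hi)
  rw [this]
  ring

noncomputable def G (ν : ℝ) (n : ℕ) (t : ℝ) : ℝ := lagR ν n t * Real.exp (-t / 2)
noncomputable def G1 (ν : ℝ) (n : ℕ) (t : ℝ) : ℝ :=
  (lagD ν n t - lagR ν n t / 2) * Real.exp (-t / 2)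
noncomputable def G2 (ν : ℝ) (n : ℕ) (t : ℝ) : ℝ :=
  (lagD2 ν n t - lagD ν n t + lagR ν n t / 4) * Real.exp (-t / 2)

lemma hasDerivAt_exph (t : ℝ) :
    HasDerivAt (fun s : ℝ => Real.exp (-s / 2)) (Real.exp (-t / 2) * (-1 / 2)) t := by
  have h : HasDerivAt (fun s : ℝ => -s / 2) (-1 / 2) t := by
    simpa using ((hasDerivAt_id t).neg.div_const 2)
  exact h.exp

lemma hasDerivAt_G (ν : ℝ) (n : ℕ) (t : ℝ) : HasDerivAt (G ν n) (G1 ν n t) t := by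
  have h := (hasDerivAt_lagR ν n t).fun_mul (hasDerivAt_exph t)
  unfold G G1
  exact h.congr_deriv (by ring)

lemma hasDerivAt_G1 (ν : ℝ) (n : ℕ) (t : ℝ) : HasDerivAt (G1 ν n) (G2 ν n t) t := by
  have h := (((hasDerivAt_lagD ν n t).fun_sub ((hasDerivAt_lagR ν n t).div_const 2)).fun_mul
    (hasDerivAt_exph t))
  unfold G1 G2
  exact h.congr_deriv (by ring)

lemma scalar_key (ν : ℝ) (hν : -1 ≤ ν) (n d mm : ℕ) (hd : ν = (mm : ℝ) / 2 + d - 1) (t : ℝ) :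
    (1 / 2 : ℝ) * (-(4 * t * G2 ν n t + 2 * mm * G1 ν n t + 4 * d * G1 ν n t)
        + t * G ν n t - (mm : ℝ) * G ν n t) = (2 * n + d : ℝ) * G ν n t := by
  have h := lag_ode ν hν n t
  unfold G G1 G2
  have hnu : ν + 1 = (mm : ℝ) / 2 + d := by rw [hd]; ring
  calc (1 / 2 : ℝ) * (-(4 * t * ((lagD2 ν n t - lagD ν n t + lagR ν n t / 4) * Real.exp (-t / 2))
          + 2 * mm * ((lagD ν n t - lagR ν n t / 2) * Real.exp (-t / 2))
          + 4 * d * ((lagD ν n t - lagR ν n t / 2) * Real.exp (-t / 2)))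
        + t * (lagR ν n t * Real.exp (-t / 2)) - (mm : ℝ) * (lagR ν n t * Real.exp (-t / 2)))
      = (-2 * Real.exp (-t / 2)) * (t * lagD2 ν n t + (ν + 1 - t) * lagD ν n t
          + (n : ℝ) * lagR ν n t) + (2 * n + d : ℝ) * (lagR ν n t * Real.exp (-t / 2)) := by
        rw [hnu]; ring
    _ = (2 * n + d : ℝ) * (lagR ν n t * Real.exp (-t / 2)) := by rw [h]; ring

section MV

variable {m : ℕ} {A : Type*} [NormedRing A] [NormedAlgebra ℝ A]

local notation "E" => EuclideanSpace ℝ (Fin m)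

lemma pd_eq {f : E → A} {F : E →L[ℝ] A} {x : E} (i : Fin m) (h : HasFDerivAt f F x) :
    pd i f x = F (EuclideanSpace.single i 1) := by
  unfold pd; rw [h.fderiv]

lemma sum_single (x : E) : ∑ i, x i • EuclideanSpace.single i (1 : ℝ) = x := by
  ext l
  rw [WithLp.ofLp_sum, Finset.sum_apply]
  have h : ∀ c : Fin m, (x c • EuclideanSpace.single c (1:ℝ)) l = if l = c then x c else 0 := by
    intro c
    show x c • (EuclideanSpace.single c (1:ℝ)) l = _
    rw [EuclideanSpace.single_apply]
    by_cases h : l = c <;> simp [h]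
  simp only [h]
  simp

lemma normsq_eq (y : E) : ‖y‖ ^ 2 = ∑ i, (y i) ^ 2 := by
  rw [EuclideanSpace.norm_eq]
  rw [Real.sq_sqrt (by positivity)]
  simp [Real.norm_eq_abs, sq_abs]

noncomputable def QF (x : E) : E →L[ℝ] ℝ :=
  ∑ i, (2 * x i) • EuclideanSpace.proj i

lemma QF_single (x : E) (i : Fin m) : QF x (EuclideanSpace.single i 1) = 2 * x i := by
  unfold QF
  rw [ContinuousLinearMap.sum_apply]
  simp only [ContinuousLinearMap.smul_apply, PiLp.proj_apply, EuclideanSpace.single_apply,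
    smul_eq_mul, mul_ite, mul_one, mul_zero]
  simp

lemma hasFDerivAt_normsq (x : E) : HasFDerivAt (fun y : E => ‖y‖ ^ 2) (QF x) x := by
  have : (fun y : E => ‖y‖ ^ 2) = fun y : E => ∑ i, (y i) ^ 2 := funext normsq_eq
  rw [this]
  unfold QF
  refine HasFDerivAt.fun_sum fun i _ => ?_
  have h1 : HasFDerivAt (fun y : E => y i) (EuclideanSpace.proj (𝕜 := ℝ) i) x :=
    PiLp.hasFDerivAt_apply 2 x i
  have h2 := (hasDerivAt_pow 2 (x i)).comp_hasFDerivAt x h1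
  simpa [pow_one, mul_comm, Function.comp_def] using h2

lemma contDiff_pd {N : E → A} (hN : ContDiff ℝ (⊤ : ℕ∞) N) (i : Fin m) :
    ContDiff ℝ (⊤ : ℕ∞) (pd i N) := by
  show ContDiff ℝ (⊤ : ℕ∞) fun x => fderiv ℝ N x (EuclideanSpace.single i 1)
  exact (hN.fderiv_right (mod_cast le_top)).clm_apply contDiff_const

lemma pd_eigen_first (g g1 : ℝ → ℝ) (hg : ∀ t, HasDerivAt g (g1 t) t)
    (N : E → A) (hN : ContDiff ℝ (⊤ : ℕ∞) N) (i : Fin m) (x : E) :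
    pd i (fun y => g (‖y‖ ^ 2) • N y) x
      = (g1 (‖x‖ ^ 2) * (2 * x i)) • N x + g (‖x‖ ^ 2) • pd i N x := by
  have hq := hasFDerivAt_normsq x
  have hc : HasFDerivAt (fun y : E => g (‖y‖ ^ 2)) (g1 (‖x‖ ^ 2) • QF x) x :=
    (hg _).comp_hasFDerivAt x hq
  have hNx : HasFDerivAt N (fderiv ℝ N x) x := (hN.differentiable (by simp) x).hasFDerivAt
  rw [pd_eq i (hc.fun_smul hNx)]
  rw [ContinuousLinearMap.add_apply, ContinuousLinearMap.smulRight_apply,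
    ContinuousLinearMap.smul_apply, ContinuousLinearMap.smul_apply, QF_single]
  rw [smul_eq_mul, add_comm]
  rfl

lemma euler (N : E → A) (hN : ContDiff ℝ (⊤ : ℕ∞) N) (d : ℕ)
    (hhom : ∀ (t : ℝ) (x : E), N (t • x) = t ^ d • N x) (x : E) :
    ∑ i, x i • pd i N x = (d : ℝ) • N x := by
  have hNd : Differentiable ℝ N := hN.differentiable (by simp)
  have hs : HasDerivAt (fun t : ℝ => t • x) x 1 := by
    simpa using (hasDerivAt_id (1:ℝ)).smul_const x
  have hfd : HasFDerivAt N (fderiv ℝ N x) ((1:ℝ) • x) := by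
    rw [one_smul]; exact (hNd x).hasFDerivAt
  have h1 : HasDerivAt (fun t : ℝ => N (t • x)) (fderiv ℝ N x x) 1 :=
    hfd.comp_hasDerivAt 1 hs
  have h2 : HasDerivAt (fun t : ℝ => t ^ d • N x) ((d : ℝ) • N x) 1 := by
    simpa using (hasDerivAt_pow d (1:ℝ)).smul_const (N x)
  have hfun : (fun t : ℝ => N (t • x)) = fun t : ℝ => t ^ d • N x :=
    funext fun t => hhom t x
  rw [hfun] at h1
  have h3 : fderiv ℝ N x x = (d : ℝ) • N x := h1.unique h2
  have h4 : fderiv ℝ N x x = ∑ i, x i • pd i N x := by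
    have := congrArg (fderiv ℝ N x) (sum_single x).symm
    rw [this, map_sum]
    exact Finset.sum_congr rfl fun i _ => by rw [map_smul]; rfl
  rw [← h4, h3]

lemma pd2_eigen (g g1 g2 : ℝ → ℝ) (hg : ∀ t, HasDerivAt g (g1 t) t)
    (hg1 : ∀ t, HasDerivAt g1 (g2 t) t)
    (N : E → A) (hN : ContDiff ℝ (⊤ : ℕ∞) N) (i : Fin m) (x : E) :
    pd i (pd i (fun y => g (‖y‖ ^ 2) • N y)) x
      = (g2 (‖x‖ ^ 2) * (2 * x i) * (2 * x i) + g1 (‖x‖ ^ 2) * 2) • N x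
        + (g1 (‖x‖ ^ 2) * (2 * x i)) • pd i N x
        + (g1 (‖x‖ ^ 2) * (2 * x i)) • pd i N x
        + g (‖x‖ ^ 2) • pd i (pd i N) x := by
  have hrw : pd i (fun z => g (‖z‖ ^ 2) • N z)
      = fun y => (g1 (‖y‖ ^ 2) * (2 * y i)) • N y + g (‖y‖ ^ 2) • pd i N y :=
    funext fun y => pd_eigen_first g g1 hg N hN i y
  rw [hrw]
  have hq := hasFDerivAt_normsq x
  have hNx : HasFDerivAt N (fderiv ℝ N x) x := (hN.differentiable (by simp) x).hasFDerivAt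
  have hpdN : HasFDerivAt (pd i N) (fderiv ℝ (pd i N) x) x :=
    (((contDiff_pd hN i).differentiable (by simp)) x).hasFDerivAt
  have hc : HasFDerivAt (fun y : E => g (‖y‖ ^ 2)) (g1 (‖x‖ ^ 2) • QF x) x :=
    (hg _).comp_hasFDerivAt x hq
  have hc1 : HasFDerivAt (fun y : E => g1 (‖y‖ ^ 2)) (g2 (‖x‖ ^ 2) • QF x) x :=
    (hg1 _).comp_hasFDerivAt x hq
  have hcoord : HasFDerivAt (fun y : E => 2 * y i)
      ((2 : ℝ) • EuclideanSpace.proj (𝕜 := ℝ) i) x :=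
    (PiLp.hasFDerivAt_apply 2 x i).const_mul 2
  have hmul := hc1.fun_mul hcoord
  have htot := (hmul.fun_smul hNx).fun_add (hc.fun_smul hpdN)
  rw [pd_eq i htot]
  have hpp : (fderiv ℝ (pd i N) x) (EuclideanSpace.single i 1) = pd i (pd i N) x := rfl
  have hproj : (EuclideanSpace.proj (𝕜 := ℝ) i) (EuclideanSpace.single i (1:ℝ)) = 1 := by
    simp [EuclideanSpace.single_apply]
  have hNp : (fderiv ℝ N x) (EuclideanSpace.single i 1) = pd i N x := rfl
  simp only [ContinuousLinearMap.add_apply, ContinuousLinearMap.smul_apply,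
    ContinuousLinearMap.smulRight_apply, QF_single, hproj, hpp, hNp, smul_eq_mul]
  match_scalars <;> ring

lemma main_key (g g1 g2 : ℝ → ℝ) (hg : ∀ t, HasDerivAt g (g1 t) t)
    (hg1 : ∀ t, HasDerivAt g1 (g2 t) t)
    (N : E → A) (hN : ContDiff ℝ (⊤ : ℕ∞) N) (d : ℕ) (c : ℝ)
    (heuler : ∀ x : E, ∑ i, x i • pd i N x = (d : ℝ) • N x)
    (hharm : ∀ x : E, ∑ i, pd i (pd i N) x = 0)
    (hscal : ∀ t : ℝ, (1 / 2 : ℝ) * (-(4 * t * g2 t + 2 * m * g1 t + 4 * d * g1 t)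
        + t * g t - (m : ℝ) * g t) = c * g t) (x : E) :
    (1 / 2 : ℝ) • (-(∑ i, pd i (pd i (fun y => g (‖y‖ ^ 2) • N y)) x)
        + ‖x‖ ^ 2 • (g (‖x‖ ^ 2) • N x) - (m : ℝ) • (g (‖x‖ ^ 2) • N x))
      = c • (g (‖x‖ ^ 2) • N x) := by
  have hsum : ∑ i, pd i (pd i (fun y => g (‖y‖ ^ 2) • N y)) x
      = (4 * ‖x‖ ^ 2 * g2 (‖x‖ ^ 2) + 2 * m * g1 (‖x‖ ^ 2) + 4 * d * g1 (‖x‖ ^ 2)) • N x := by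
    rw [Finset.sum_congr rfl fun i _ => pd2_eigen g g1 g2 hg hg1 N hN i x]
    rw [Finset.sum_add_distrib, Finset.sum_add_distrib, Finset.sum_add_distrib]
    have e1 : (∑ i, (g2 (‖x‖ ^ 2) * (2 * x i) * (2 * x i) + g1 (‖x‖ ^ 2) * 2) • N x)
        = (4 * ‖x‖ ^ 2 * g2 (‖x‖ ^ 2) + 2 * m * g1 (‖x‖ ^ 2)) • N x := by
      rw [← Finset.sum_smul]
      congr 1
      rw [Finset.sum_add_distrib, Finset.sum_const, Finset.card_univ, Fintype.card_fin,
        nsmul_eq_mul]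
      have h4 : ∑ i, g2 (‖x‖ ^ 2) * (2 * x i) * (2 * x i) = 4 * ‖x‖ ^ 2 * g2 (‖x‖ ^ 2) := by
        calc ∑ i, g2 (‖x‖ ^ 2) * (2 * x i) * (2 * x i)
            = ∑ i, (4 * g2 (‖x‖ ^ 2)) * (x i) ^ 2 :=
              Finset.sum_congr rfl fun i _ => by ring
          _ = (4 * g2 (‖x‖ ^ 2)) * ∑ i, (x i) ^ 2 := by rw [Finset.mul_sum]
          _ = 4 * ‖x‖ ^ 2 * g2 (‖x‖ ^ 2) := by rw [← normsq_eq x]; ring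
      rw [h4]
      ring
    have e2 : (∑ i, (g1 (‖x‖ ^ 2) * (2 * x i)) • pd i N x)
        = (2 * g1 (‖x‖ ^ 2) * d) • N x := by
      calc ∑ i, (g1 (‖x‖ ^ 2) * (2 * x i)) • pd i N x
          = ∑ i, (2 * g1 (‖x‖ ^ 2)) • (x i • pd i N x) :=
            Finset.sum_congr rfl fun i _ => by rw [smul_smul]; congr 1; ring
        _ = (2 * g1 (‖x‖ ^ 2)) • ∑ i, x i • pd i N x := (Finset.smul_sum).symm
        _ = (2 * g1 (‖x‖ ^ 2)) • ((d : ℝ) • N x) := by rw [heuler x]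
        _ = (2 * g1 (‖x‖ ^ 2) * d) • N x := by rw [smul_smul]
    have e3 : (∑ i, g (‖x‖ ^ 2) • pd i (pd i N) x) = (0 : A) := by
      rw [← Finset.smul_sum, hharm x, smul_zero]
    rw [e1, e2, e3, add_zero, ← add_smul, ← add_smul]
    congr 1
    ring
  rw [hsum]
  match_scalars
  linear_combination hscal (‖x‖ ^ 2)

lemma pd2_symm (M : E → A) (hM : ContDiff ℝ (⊤ : ℕ∞) M) (a b : Fin m) (x : E) :
    pd a (pd b M) x = pd b (pd a M) x := by
  have hM1 : ∀ y : E, HasFDerivAt M (fderiv ℝ M y) y :=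
    fun y => (hM.differentiable (by simp) y).hasFDerivAt
  have hM2 : HasFDerivAt (fderiv ℝ M) (fderiv ℝ (fderiv ℝ M) x) x :=
    (((hM.fderiv_right (m := (⊤ : ℕ∞)) (mod_cast le_top)).differentiable (by simp)) x).hasFDerivAt
  have hsymm := second_derivative_symmetric hM1 hM2
  have hpd : ∀ (a b : Fin m),
      pd a (pd b M) x = fderiv ℝ (fderiv ℝ M) x (EuclideanSpace.single a 1)
        (EuclideanSpace.single b 1) := by
    intro a b
    show fderiv ℝ (fun y => fderiv ℝ M y (EuclideanSpace.single b 1)) x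
        (EuclideanSpace.single a 1) = _
    rw [fderiv_clm_apply ((hM.fderiv_right (m := (⊤ : ℕ∞)) (mod_cast le_top)).differentiable (by simp) x)
      (differentiableAt_const _)]
    simp
  rw [hpd a b, hpd b a, hsymm]

lemma harm_of_mono (e : Fin m → A)
    (he : ∀ i j : Fin m, e i * e j + e j * e i = if i = j then (-2 : ℝ) • (1 : A) else 0)
    (M : E → A) (hM : ContDiff ℝ (⊤ : ℕ∞) M)
    (hmono : ∀ x : E, (∑ i : Fin m, e i * pd i M x) = 0) (x : E) :
    ∑ i, pd i (pd i M) x = 0 := by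
  have hz : ∀ i : Fin m, ∑ l : Fin m, e l * pd i (pd l M) x = 0 := by
    intro i
    have hF : HasFDerivAt (fun y => ∑ l : Fin m, e l * pd l M y)
        (∑ l : Fin m, e l • fderiv ℝ (pd l M) x) x := by
      refine HasFDerivAt.fun_sum fun l _ => ?_
      exact (((contDiff_pd hM l).differentiable (by simp) x).hasFDerivAt).const_mul (e l)
    have h0 : pd i (fun y => ∑ l : Fin m, e l * pd l M y) x = 0 := by
      have : (fun y : E => ∑ l : Fin m, e l * pd l M y) = fun _ => (0 : A) :=
        funext fun y => hmono y
      rw [this]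
      unfold pd
      simp
    rw [pd_eq i hF] at h0
    rw [ContinuousLinearMap.sum_apply] at h0
    calc ∑ l : Fin m, e l * pd i (pd l M) x
        = ∑ l : Fin m, (e l • fderiv ℝ (pd l M) x) (EuclideanSpace.single i 1) := by
          refine Finset.sum_congr rfl fun l _ => ?_
          rw [ContinuousLinearMap.smul_apply, smul_eq_mul]
          rfl
      _ = 0 := h0
  have hdouble : ∑ i : Fin m, ∑ l : Fin m, (e i * e l + e l * e i) * pd i (pd l M) x = 0 := by
    have h1 : ∑ i : Fin m, e i * ∑ l : Fin m, e l * pd i (pd l M) x = 0 := by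
      simp [hz]
    have h2 : ∑ l : Fin m, e l * ∑ i : Fin m, e i * pd l (pd i M) x = 0 := by
      simp [hz]
    have h2' : ∑ i : Fin m, ∑ l : Fin m, e l * (e i * pd i (pd l M) x) = 0 := by
      rw [Finset.sum_comm]
      calc ∑ l : Fin m, ∑ i : Fin m, e l * (e i * pd i (pd l M) x)
          = ∑ l : Fin m, e l * ∑ i : Fin m, e i * pd l (pd i M) x := by
            refine Finset.sum_congr rfl fun l _ => ?_
            rw [Finset.mul_sum]
            exact Finset.sum_congr rfl fun i _ => by rw [pd2_symm M hM i l x]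
        _ = 0 := h2
    calc ∑ i : Fin m, ∑ l : Fin m, (e i * e l + e l * e i) * pd i (pd l M) x
        = (∑ i : Fin m, ∑ l : Fin m, e i * (e l * pd i (pd l M) x))
          + ∑ i : Fin m, ∑ l : Fin m, e l * (e i * pd i (pd l M) x) := by
          rw [← Finset.sum_add_distrib]
          refine Finset.sum_congr rfl fun i _ => ?_
          rw [← Finset.sum_add_distrib]
          refine Finset.sum_congr rfl fun l _ => ?_
          rw [add_mul, mul_assoc, mul_assoc]
      _ = 0 := by
          rw [h2']
          rw [add_zero]
          calc ∑ i : Fin m, ∑ l : Fin m, e i * (e l * pd i (pd l M) x)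
              = ∑ i : Fin m, e i * ∑ l : Fin m, e l * pd i (pd l M) x := by
                refine Finset.sum_congr rfl fun i _ => ?_
                rw [Finset.mul_sum]
            _ = 0 := h1
  have hleft : ∑ i : Fin m, ∑ l : Fin m, (e i * e l + e l * e i) * pd i (pd l M) x
      = (-2 : ℝ) • ∑ i, pd i (pd i M) x := by
    rw [Finset.smul_sum]
    refine Finset.sum_congr rfl fun i _ => ?_
    rw [Finset.sum_eq_single i]
    · rw [he i i, if_pos rfl, smul_mul_assoc, one_mul]
    · intro b _ hb
      rw [he i b, if_neg (fun h => hb h.symm), zero_mul]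
    · intro h; exact absurd (Finset.mem_univ i) h
  rw [hleft] at hdouble
  have := smul_eq_zero.mp hdouble
  rcases this with h | h
  · norm_num at h
  · exact h

noncomputable def XL (e : Fin m → A) : E →L[ℝ] A :=
  ∑ l, (EuclideanSpace.proj (𝕜 := ℝ) l).smulRight (e l)

lemma XL_apply (e : Fin m → A) (y : E) : XL e y = ∑ l, y l • e l := by
  unfold XL
  rw [ContinuousLinearMap.sum_apply]
  exact Finset.sum_congr rfl fun l _ => by
    rw [ContinuousLinearMap.smulRight_apply, PiLp.proj_apply]

lemma XL_single (e : Fin m → A) (i : Fin m) : XL e (EuclideanSpace.single i 1) = e i := by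
  rw [XL_apply]
  rw [Finset.sum_eq_single i]
  · simp [EuclideanSpace.single_apply]
  · intro b _ hb
    simp [EuclideanSpace.single_apply, hb]
  · intro h; exact absurd (Finset.mem_univ i) h

variable (e : Fin m → A)

lemma NX_eq (M : E → A) : (fun y : E => (∑ l, y l • e l) * M y) = fun y => XL e y * M y :=
  funext fun y => by rw [XL_apply]

lemma NX_contDiff (M : E → A) (hM : ContDiff ℝ (⊤ : ℕ∞) M) :
    ContDiff ℝ (⊤ : ℕ∞) (fun y : E => (∑ l, y l • e l) * M y) := by
  rw [NX_eq e M]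
  exact (XL e).contDiff.mul hM

lemma NX_hom (M : E → A) (k : ℕ) (hhom : ∀ (t : ℝ) (x : E), M (t • x) = t ^ k • M x) (t : ℝ) (x : E) :
    (∑ l, (t • x) l • e l) * M (t • x) = t ^ (k + 1) • ((∑ l, x l • e l) * M x) := by
  rw [← XL_apply, ← XL_apply, map_smul, hhom t x, smul_mul_assoc, mul_smul_comm, smul_smul,
    ← pow_succ']

lemma NX_pd (M : E → A) (hM : ContDiff ℝ (⊤ : ℕ∞) M) (i : Fin m) (y : E) :
    pd i (fun z : E => (∑ l, z l • e l) * M z) y = XL e y * pd i M y + e i * M y := by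
  rw [NX_eq e M]
  have h := ((XL e).hasFDerivAt (x := y)).fun_mul' ((hM.differentiable (by simp) y).hasFDerivAt)
  rw [pd_eq i h]
  rw [ContinuousLinearMap.add_apply, ContinuousLinearMap.smul_apply,
    ContinuousLinearMap.smul_apply, XL_single, smul_eq_mul, op_smul_eq_mul]
  rfl

lemma NX_harm (M : E → A)
    (he : ∀ i j : Fin m, e i * e j + e j * e i = if i = j then (-2 : ℝ) • (1 : A) else 0)
    (hM : ContDiff ℝ (⊤ : ℕ∞) M)
    (hmono : ∀ x : E, (∑ i : Fin m, e i * pd i M x) = 0) (x : E) :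
    ∑ i, pd i (pd i (fun y : E => (∑ l, y l • e l) * M y)) x = 0 := by
  have hpd : ∀ i : Fin m, pd i (fun z : E => (∑ l, z l • e l) * M z)
      = fun y => XL e y * pd i M y + e i * M y :=
    fun i => funext fun y => NX_pd e M hM i y
  have hstep : ∀ i : Fin m, pd i (pd i (fun y : E => (∑ l, y l • e l) * M y)) x
      = (XL e x * pd i (pd i M) x + e i * pd i M x) + e i * pd i M x := by
    intro i
    rw [hpd i]
    have h1 := ((XL e).hasFDerivAt (x := x)).fun_mul'
      (((contDiff_pd hM i).differentiable (by simp) x).hasFDerivAt)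
    have h2 := ((hM.differentiable (by simp) x).hasFDerivAt).const_mul (e i)
    rw [pd_eq i (h1.fun_add h2)]
    rw [ContinuousLinearMap.add_apply, ContinuousLinearMap.add_apply,
      ContinuousLinearMap.smul_apply, ContinuousLinearMap.smul_apply,
      ContinuousLinearMap.smul_apply, XL_single, smul_eq_mul, smul_eq_mul, op_smul_eq_mul]
    rfl
  rw [Finset.sum_congr rfl fun i _ => hstep i]
  rw [Finset.sum_add_distrib, Finset.sum_add_distrib, ← Finset.mul_sum,
    harm_of_mono e he M hM hmono x, mul_zero, zero_add, hmono x, add_zero]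

end MV

/-- the Hermite operator `H = (1/2)(-Δ + |x|² - m)` has the basis functions
`ψ_{2j,k} = L_j^{m/2+k-1}(|x|²) M_k e^{-|x|²/2}` and
`ψ_{2j+1,k} = L_j^{m/2+k}(|x|²) x M_k e^{-|x|²/2}` as eigenfunctions, with eigenvalues
`2j+k` and `2j+1+k` respectively, for any spherical monogenic `M_k` of degree `k`. -/
theorem hermite_operator_eigenvalues {m : ℕ} {A : Type*} [NormedRing A] [NormedAlgebra ℝ A]
    (e : Fin m → A)
    (he : ∀ i j : Fin m, e i * e j + e j * e i = if i = j then (-2 : ℝ) • (1 : A) else 0)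
    (k : ℕ) (M : EuclideanSpace ℝ (Fin m) → A) (hM : ContDiff ℝ (⊤ : ℕ∞) M)
    (hhom : ∀ (t : ℝ) (x : EuclideanSpace ℝ (Fin m)), M (t • x) = t ^ k • M x)
    (hmono : ∀ x, (∑ i : Fin m, e i * pd i M x) = 0)
    (j : ℕ) :
    (∀ x, (1 / 2 : ℝ) •
        (-(∑ i : Fin m, pd i (pd i (fun y =>
            (lagR ((m : ℝ) / 2 + k - 1) j (‖y‖ ^ 2) * Real.exp (-‖y‖ ^ 2 / 2)) • M y)) x) +
          ‖x‖ ^ 2 • ((lagR ((m : ℝ) / 2 + k - 1) j (‖x‖ ^ 2) * Real.exp (-‖x‖ ^ 2 / 2)) • M x) -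
          (m : ℝ) • ((lagR ((m : ℝ) / 2 + k - 1) j (‖x‖ ^ 2) * Real.exp (-‖x‖ ^ 2 / 2)) • M x)) =
        ((2 * j + k : ℝ)) •
          ((lagR ((m : ℝ) / 2 + k - 1) j (‖x‖ ^ 2) * Real.exp (-‖x‖ ^ 2 / 2)) • M x)) ∧
    (∀ x, (1 / 2 : ℝ) •
        (-(∑ i : Fin m, pd i (pd i (fun y =>
            (lagR ((m : ℝ) / 2 + k) j (‖y‖ ^ 2) * Real.exp (-‖y‖ ^ 2 / 2)) •
              ((∑ l : Fin m, y l • e l) * M y))) x) +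
          ‖x‖ ^ 2 • ((lagR ((m : ℝ) / 2 + k) j (‖x‖ ^ 2) * Real.exp (-‖x‖ ^ 2 / 2)) •
            ((∑ l : Fin m, x l • e l) * M x)) -
          (m : ℝ) • ((lagR ((m : ℝ) / 2 + k) j (‖x‖ ^ 2) * Real.exp (-‖x‖ ^ 2 / 2)) •
            ((∑ l : Fin m, x l • e l) * M x))) =
        ((2 * j + 1 + k : ℝ)) •
          ((lagR ((m : ℝ) / 2 + k) j (‖x‖ ^ 2) * Real.exp (-‖x‖ ^ 2 / 2)) •
            ((∑ l : Fin m, x l • e l) * M x))) := by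
  have hnn1 : (0 : ℝ) ≤ (m : ℝ) := Nat.cast_nonneg m
  have hnn2 : (0 : ℝ) ≤ (k : ℝ) := Nat.cast_nonneg k
  have hν1 : (-1 : ℝ) ≤ (m : ℝ) / 2 + k - 1 := by linarith
  have hν2 : (-1 : ℝ) ≤ (m : ℝ) / 2 + k := by linarith
  refine ⟨fun x => ?_, fun x => ?_⟩
  · exact main_key (G ((m : ℝ) / 2 + k - 1) j) (G1 ((m : ℝ) / 2 + k - 1) j)
      (G2 ((m : ℝ) / 2 + k - 1) j) (fun t => hasDerivAt_G _ _ t)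
      (fun t => hasDerivAt_G1 _ _ t) M hM k (2 * (j : ℝ) + k)
      (euler M hM k hhom) (harm_of_mono e he M hM hmono)
      (fun t => scalar_key _ hν1 j k m rfl t) x
  · have hd : ((m : ℝ) / 2 + k) = (m : ℝ) / 2 + ((k + 1 : ℕ) : ℝ) - 1 := by push_cast; ring
    have hc : (2 * (j : ℝ) + 1 + (k : ℝ)) = 2 * (j : ℝ) + ((k + 1 : ℕ) : ℝ) := by
      push_cast; ring
    have hNc := NX_contDiff e M hM
    have hmain := main_key (G ((m : ℝ) / 2 + k) j) (G1 ((m : ℝ) / 2 + k) j)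
      (G2 ((m : ℝ) / 2 + k) j) (fun t => hasDerivAt_G _ _ t)
      (fun t => hasDerivAt_G1 _ _ t) (fun y => (∑ l, y l • e l) * M y)
      hNc (k + 1) (2 * (j : ℝ) + ((k + 1 : ℕ) : ℝ))
      (euler _ hNc (k + 1) (fun t x => NX_hom e M k hhom t x))
      (NX_harm e M he hM hmono)
      (fun t => scalar_key _ hν2 j (k + 1) m hd t) x
    rw [hc]
    exact hmain
end

section
/- In dimension m = 2, the fractional Clifford–Fourier kernel has the closed form: for α ∈ (0,π), β ∈ R, and x, y ∈ R², e^{iβΓ_y}( e^{-i⟨x,y⟩/ sin α} ) = [ cos( t sin β / sin α ) + (x ∧ y) sin( t sin β / sin α ) / t ] · e^{-i ⟨x,y⟩ cos β / sin α}, where t = |x ∧ y| = √(|x|²|y|² − ⟨x,y⟩²) (and the second term is interpreted as (x∧y)(sin β / sin α) when t = 0). -/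
/-- The Gamma operator `Γ = -∑_{j<k} e_j e_k (x_j ∂_{x_k} - x_k ∂_{x_j})`. -/
noncomputable def Gam {m : ℕ} {A : Type*} [NormedRing A] [NormedAlgebra ℂ A]
    (e : Fin m → A) (f : EuclideanSpace ℝ (Fin m) → A) (x : EuclideanSpace ℝ (Fin m)) : A :=
  -∑ j : Fin m, ∑ k : Fin m,
    if j < k then e j * e k * ((x j : ℝ) • pd k f x - (x k : ℝ) • pd j f x) else 0

/-- `e^{iβΓ}` applied to a function, via the exponential series. -/
noncomputable def gamExp {m : ℕ} {A : Type*} [NormedRing A] [NormedAlgebra ℂ A]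
    (e : Fin m → A) (β : ℝ) (f : EuclideanSpace ℝ (Fin m) → A)
    (y : EuclideanSpace ℝ (Fin m)) : A :=
  ∑' n : ℕ, ((Nat.factorial n : ℂ))⁻¹ •
    ((fun g z => (Complex.I * (β : ℂ)) • Gam e g z)^[n] f) y

/-!
In dimension two `Γ` acts on `f • 1`, for scalar `f`, as `-e₁e₂ L f`, where
`L = z₀∂₁ - z₁∂₀` generates the rotations `R_θ`. Hence `e^{iβΓ}` becomes
`∑ (Lⁿ f)(y) (βJ)ⁿ / n!` with `J = -i e₁e₂`, and `J² = 1` splits this into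
`(F(β) + F(-β))/2 + (F(β) - F(-β))/2 · J` for `F(θ) = ∑ θⁿ (Lⁿ f)(y) / n!`.
The `(Lⁿ f)(y)` are the derivatives at `0` of `θ ↦ f (R_θ y)`, which for the plane wave
is the restriction of the entire function `ζ ↦ exp (-i (⟨x,y⟩ cos ζ - (x∧y) sin ζ) / sin α)`;
so `F(θ) = f (R_θ y)` by Taylor's theorem, and Euler's formula gives the closed form.
-/

open scoped ContDiff

local notation "ℝ²" => EuclideanSpace ℝ (Fin 2)

section AngularDerivative

variable {F : Type*} [NormedAddCommGroup F] [NormedSpace ℝ F]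

noncomputable def angDeriv (f : ℝ² → F) (z : ℝ²) : F :=
  z 0 • pd 1 f z - z 1 • pd 0 f z

def perp (z : ℝ²) : ℝ² := !₂[-z 1, z 0]

noncomputable def rot (y : ℝ²) (θ : ℝ) : ℝ² := Real.cos θ • y + Real.sin θ • perp y

lemma perp_eq (z : ℝ²) :
    perp z = z 0 • EuclideanSpace.single 1 1 - z 1 • EuclideanSpace.single 0 1 := by
  ext i; fin_cases i <;> simp [perp]

lemma angDeriv_eq_fderiv_perp (f : ℝ² → F) (z : ℝ²) :
    angDeriv f z = fderiv ℝ f z (perp z) := by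
  rw [perp_eq, map_sub, map_smul, map_smul, angDeriv, pd, pd]

lemma rot_zero (y : ℝ²) : rot y 0 = y := by simp [rot]

lemma rot_apply_zero (y : ℝ²) (θ : ℝ) : rot y θ 0 = y 0 * Real.cos θ - y 1 * Real.sin θ := by
  simp [rot, perp]; ring

lemma rot_apply_one (y : ℝ²) (θ : ℝ) : rot y θ 1 = y 0 * Real.sin θ + y 1 * Real.cos θ := by
  simp [rot, perp]; ring

lemma hasDerivAt_rot (y : ℝ²) (θ : ℝ) : HasDerivAt (rot y) (perp (rot y θ)) θ := by
  refine (((Real.hasDerivAt_cos θ).smul_const y).add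
    ((Real.hasDerivAt_sin θ).smul_const (perp y))).congr_deriv ?_
  ext i; fin_cases i <;> simp [rot, perp]; ring

lemma DifferentiableAt.hasDerivAt_comp_rot {f : ℝ² → F} {y : ℝ²} {θ : ℝ}
    (hf : DifferentiableAt ℝ f (rot y θ)) :
    HasDerivAt (fun t => f (rot y t)) (angDeriv f (rot y θ)) θ := by
  rw [angDeriv_eq_fderiv_perp]
  exact hf.hasFDerivAt.comp_hasDerivAt θ (hasDerivAt_rot y θ)

lemma contDiff_angDeriv {f : ℝ² → F} (hf : ContDiff ℝ ∞ f) : ContDiff ℝ ∞ (angDeriv f) := by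
  have hpd (k : Fin 2) : ContDiff ℝ ∞ (pd k f) :=
    (hf.fderiv_right le_rfl).clm_apply contDiff_const
  have hcoord (k : Fin 2) : ContDiff ℝ ∞ fun z : ℝ² => z k :=
    (EuclideanSpace.proj k : ℝ² →L[ℝ] ℝ).contDiff
  exact ((hcoord 0).smul (hpd 1)).sub ((hcoord 1).smul (hpd 0))

lemma contDiff_angDeriv_iterate {f : ℝ² → F} (hf : ContDiff ℝ ∞ f) (n : ℕ) :
    ContDiff ℝ ∞ (angDeriv^[n] f) := by
  induction n with
  | zero => exact hf
  | succ n ih => rw [Function.iterate_succ_apply']; exact contDiff_angDeriv ih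

end AngularDerivative

lemma angDeriv_iterate_rot_eq_iteratedDeriv {f : ℝ² → ℂ} {G : ℂ → ℂ} {y : ℝ²}
    (hf : ContDiff ℝ ∞ f) (hG : Differentiable ℂ G) (hfG : ∀ θ : ℝ, G θ = f (rot y θ))
    (n : ℕ) (θ : ℝ) : angDeriv^[n] f (rot y θ) = iteratedDeriv n G θ := by
  induction n generalizing θ with
  | zero => exact (hfG θ).symm
  | succ n ih =>
    rw [Function.iterate_succ_apply', iteratedDeriv_succ]
    have hGn : Differentiable ℂ (iteratedDeriv n G) := hG.contDiff.differentiable_iteratedDeriv' n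
    have hfn := (contDiff_angDeriv_iterate hf n).differentiable (by simp) (rot y θ)
    refine hfn.hasDerivAt_comp_rot.unique ?_
    simp_rw [ih]
    exact (hGn θ).hasDerivAt.comp_ofReal

lemma hasSum_angDeriv_iterate_mul_pow {f : ℝ² → ℂ} {G : ℂ → ℂ} {y : ℝ²}
    (hf : ContDiff ℝ ∞ f) (hG : Differentiable ℂ G) (hfG : ∀ θ : ℝ, G θ = f (rot y θ)) (b : ℂ) :
    HasSum (fun n => (n.factorial : ℂ)⁻¹ * angDeriv^[n] f y * b ^ n) (G b) := by
  have hderiv (n : ℕ) : angDeriv^[n] f y = iteratedDeriv n G 0 := by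
    simpa [rot_zero] using angDeriv_iterate_rot_eq_iteratedDeriv hf hG hfG n 0
  refine (Complex.hasSum_taylorSeries_of_entire hG 0 b).congr_fun fun n => ?_
  simp only [hderiv, sub_zero, smul_eq_mul]
  ring

section Clifford

variable {A : Type*} [NormedRing A] [NormedAlgebra ℂ A]

lemma gam_eq_neg_mul_angDeriv (e : Fin 2 → A) (f : ℝ² → A) (z : ℝ²) :
    Gam e f z = -(e 0 * e 1 * angDeriv f z) := by
  simp [Gam, angDeriv, Fin.sum_univ_two]

lemma angDeriv_smul_const {p : ℝ² → ℂ} {z : ℝ²} (hp : DifferentiableAt ℝ p z) (v : A) :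
    angDeriv (fun w => p w • v) z = angDeriv p z • v := by
  simp only [angDeriv, pd, fderiv_smul_const hp, ContinuousLinearMap.smulRight_apply, sub_smul,
    smul_assoc]

lemma gam_iterate_smul_one (e : Fin 2 → A) (β : ℝ) {p : ℝ² → ℂ} (hp : ContDiff ℝ ∞ p) (n : ℕ) :
    (fun g z => (Complex.I * (β : ℂ)) • Gam e g z)^[n] (fun z => p z • (1 : A)) =
      fun z => angDeriv^[n] p z • ((β : ℂ) • (-Complex.I) • (e 0 * e 1)) ^ n := by
  induction n with
  | zero => simp
  | succ n ih =>
    ext z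
    rw [Function.iterate_succ_apply', ih, gam_eq_neg_mul_angDeriv,
      angDeriv_smul_const ((contDiff_angDeriv_iterate hp n).differentiable (by simp) z),
      ← Function.iterate_succ_apply' angDeriv, pow_succ']
    simp only [neg_mul, smul_mul_assoc, mul_smul_comm, smul_neg, neg_smul, smul_smul]
    congr 2
    ring

lemma mul_self_eq_neg_one_of_clifford {e : Fin 2 → A}
    (he : ∀ i j : Fin 2, e i * e j + e j * e i = if i = j then (-2 : ℂ) • (1 : A) else 0)
    (i : Fin 2) : e i * e i = -1 := by
  refine smul_right_injective A (two_ne_zero : (2 : ℂ) ≠ 0) ?_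
  simpa [two_smul] using he i i

lemma mul_mul_mul_self_eq_neg_one {R : Type*} [Ring R] {a b : R} (ha : a * a = -1)
    (hb : b * b = -1) (hab : b * a = -(a * b)) : a * b * (a * b) = -1 := by
  rw [mul_assoc, ← mul_assoc b, hab, neg_mul, mul_neg, ← mul_assoc, ← mul_assoc, ha, neg_one_mul,
    neg_mul, neg_neg, hb]

lemma pow_eq_of_mul_self_eq_one {J : A} (hJ : J * J = 1) (n : ℕ) :
    J ^ n = ((1 + (-1) ^ n) / 2 : ℂ) • (1 : A) + ((1 - (-1) ^ n) / 2 : ℂ) • J := by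
  induction n with
  | zero => norm_num
  | succ n ih =>
    rw [pow_succ, ih, add_mul, smul_mul_assoc, smul_mul_assoc, one_mul, hJ, pow_succ]
    module

lemma hasSum_smul_pow_of_mul_self_eq_one {J : A} (hJ : J * J = 1) {a : ℕ → ℂ} {b sp sm : ℂ}
    (hp : HasSum (fun n => a n * b ^ n) sp) (hm : HasSum (fun n => a n * (-b) ^ n) sm) :
    HasSum (fun n => a n • (b • J) ^ n) (((sp + sm) / 2) • 1 + ((sp - sm) / 2) • J) := by
  refine (((hp.add hm).div_const 2).smul_const 1).add
    (((hp.sub hm).div_const 2).smul_const J) |>.congr_fun fun n => ?_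
  rw [smul_pow, pow_eq_of_mul_self_eq_one hJ, neg_pow]
  module

end Clifford

noncomputable def planeWave (x : ℝ²) (s : ℝ) (z : ℝ²) : ℂ :=
  Complex.exp (-Complex.I * ((x 0 * z 0 + x 1 * z 1 : ℝ) : ℂ) / (s : ℂ))

lemma contDiff_planeWave (x : ℝ²) (s : ℝ) : ContDiff ℝ ∞ (planeWave x s) := by
  have hphase : ContDiff ℝ ∞ fun z : ℝ² => ((x 0 * z 0 + x 1 * z 1 : ℝ) : ℂ) :=
    Complex.ofRealCLM.contDiff.comp
      (by fun_prop : ContDiff ℝ ∞ fun z : ℝ² => x 0 * z 0 + x 1 * z 1)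
  unfold planeWave
  fun_prop

lemma planeWave_rot (x y : ℝ²) (s θ : ℝ) :
    planeWave x s (rot y θ) = Complex.exp (-Complex.I * (((x 0 * y 0 + x 1 * y 1 : ℝ) : ℂ) *
      Complex.cos θ - ((x 0 * y 1 - x 1 * y 0 : ℝ) : ℂ) * Complex.sin θ) / s) := by
  simp only [planeWave, rot_apply_zero, rot_apply_one, ← Complex.ofReal_cos, ← Complex.ofReal_sin]
  push_cast
  ring_nf

lemma hasSum_angDeriv_iterate_planeWave (x y : ℝ²) (s : ℝ) (b : ℂ) :
    HasSum (fun n => (n.factorial : ℂ)⁻¹ * angDeriv^[n] (planeWave x s) y * b ^ n)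
      (Complex.exp (-Complex.I * (((x 0 * y 0 + x 1 * y 1 : ℝ) : ℂ) * Complex.cos b -
        ((x 0 * y 1 - x 1 * y 0 : ℝ) : ℂ) * Complex.sin b) / s)) :=
  hasSum_angDeriv_iterate_mul_pow (G := fun ζ => Complex.exp (-Complex.I *
      (((x 0 * y 0 + x 1 * y 1 : ℝ) : ℂ) * Complex.cos ζ -
        ((x 0 * y 1 - x 1 * y 0 : ℝ) : ℂ) * Complex.sin ζ) / s))
    (contDiff_planeWave x s) (by fun_prop)
    (fun θ => (planeWave_rot x y s θ).symm) b

lemma exp_neg_I_mul_cos_sub_sin_div (u w s θ : ℝ) :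
    Complex.exp (-Complex.I * ((u : ℂ) * Complex.cos θ - (w : ℂ) * Complex.sin θ) / s) =
      Complex.exp (-Complex.I * u * Real.cos θ / s) *
        (Real.cos (w * Real.sin θ / s) + Real.sin (w * Real.sin θ / s) * Complex.I) := by
  simp only [Complex.ofReal_cos, Complex.ofReal_sin]
  rw [← Complex.exp_mul_I, ← Complex.exp_add]
  congr 1
  push_cast
  ring

lemma gamExp_planeWave {A : Type*} [NormedRing A] [NormedAlgebra ℂ A] (e : Fin 2 → A)
    (he : ∀ i j : Fin 2, e i * e j + e j * e i = if i = j then (-2 : ℂ) • (1 : A) else 0)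
    (β s : ℝ) (x y : ℝ²) :
    gamExp e β (fun z => planeWave x s z • (1 : A)) y =
      Complex.exp (-Complex.I * ((x 0 * y 0 + x 1 * y 1 : ℝ) : ℂ) * Real.cos β / s) •
        ((Real.cos ((x 0 * y 1 - x 1 * y 0) * Real.sin β / s) : ℂ) • (1 : A) +
          (Real.sin ((x 0 * y 1 - x 1 * y 0) * Real.sin β / s) : ℂ) • (e 0 * e 1)) := by
  have hJ : ((-Complex.I) • (e 0 * e 1)) * ((-Complex.I) • (e 0 * e 1)) = 1 := by
    rw [smul_mul_smul_comm, mul_mul_mul_self_eq_neg_one (mul_self_eq_neg_one_of_clifford he 0)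
      (mul_self_eq_neg_one_of_clifford he 1) (eq_neg_of_add_eq_zero_left (by simpa using he 1 0))]
    simp
  have hsum := hasSum_smul_pow_of_mul_self_eq_one hJ
    (hasSum_angDeriv_iterate_planeWave x y s β) (hasSum_angDeriv_iterate_planeWave x y s (-β))
  rw [← Complex.ofReal_neg, exp_neg_I_mul_cos_sub_sin_div, exp_neg_I_mul_cos_sub_sin_div] at hsum
  rw [gamExp]
  simp only [gam_iterate_smul_one e β (contDiff_planeWave x s), smul_smul] at hsum ⊢
  rw [hsum.tsum_eq]
  simp only [Real.cos_neg, Real.sin_neg, mul_neg, neg_div, Complex.ofReal_neg]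
  rw [smul_add, smul_smul, smul_smul]
  congr 2
  · ring
  · ring_nf
    rw [Complex.I_sq]
    ring

lemma sqrt_sq_add_sq_mul_sub_sq (a b c d : ℝ) :
    √((a ^ 2 + b ^ 2) * (c ^ 2 + d ^ 2) - (a * c + b * d) ^ 2) = |a * d - b * c| := by
  rw [← Real.sqrt_sq_eq_abs]
  congr 1
  ring

lemma cos_abs_mul (w c : ℝ) : Real.cos (|w| * c) = Real.cos (w * c) := by
  rcases abs_cases w with ⟨hw, -⟩ | ⟨hw, -⟩ <;> simp [hw]

lemma ite_abs_eq_zero_mul_self (w c : ℝ) :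
    (if |w| = 0 then c else Real.sin (|w| * c) / |w|) * w = Real.sin (w * c) := by
  rcases eq_or_ne w 0 with rfl | hw
  · simp
  rw [if_neg (abs_ne_zero.mpr hw)]
  rcases abs_cases w with ⟨habs, -⟩ | ⟨habs, -⟩
  · rw [habs, div_mul_cancel₀ _ hw]
  · rw [habs, neg_mul, Real.sin_neg, neg_div_neg_eq, div_mul_cancel₀ _ hw]

theorem fracCFT_kernel_dim_two_general {A : Type*} [NormedRing A] [NormedAlgebra ℂ A]
    (e : Fin 2 → A)
    (he : ∀ i j : Fin 2, e i * e j + e j * e i = if i = j then (-2 : ℂ) • (1 : A) else 0)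
    (α β : ℝ) (x y : EuclideanSpace ℝ (Fin 2)) :
    gamExp e β (fun z => Complex.exp (-Complex.I *
        ((x 0 * z 0 + x 1 * z 1 : ℝ) : ℂ) / (Real.sin α : ℂ)) • (1 : A)) y =
      Complex.exp (-Complex.I * ((x 0 * y 0 + x 1 * y 1 : ℝ) : ℂ) * (Real.cos β : ℂ) /
          (Real.sin α : ℂ)) •
        ((Real.cos (Real.sqrt ((x 0 ^ 2 + x 1 ^ 2) * (y 0 ^ 2 + y 1 ^ 2) -
              (x 0 * y 0 + x 1 * y 1) ^ 2) * Real.sin β / Real.sin α) : ℂ) • (1 : A) +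
          (if Real.sqrt ((x 0 ^ 2 + x 1 ^ 2) * (y 0 ^ 2 + y 1 ^ 2) -
                (x 0 * y 0 + x 1 * y 1) ^ 2) = 0 then
              ((Real.sin β / Real.sin α : ℝ) : ℂ)
            else ((Real.sin (Real.sqrt ((x 0 ^ 2 + x 1 ^ 2) * (y 0 ^ 2 + y 1 ^ 2) -
                  (x 0 * y 0 + x 1 * y 1) ^ 2) * Real.sin β / Real.sin α) /
                Real.sqrt ((x 0 ^ 2 + x 1 ^ 2) * (y 0 ^ 2 + y 1 ^ 2) -
                  (x 0 * y 0 + x 1 * y 1) ^ 2) : ℝ) : ℂ)) •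
            ((x 0 * y 1 - x 1 * y 0 : ℝ) • (e 0 * e 1))) := by
  refine (gamExp_planeWave e he β (Real.sin α) x y).trans ?_
  rw [sqrt_sq_add_sq_mul_sub_sq, ← Complex.coe_smul, smul_smul]
  simp only [mul_div_assoc, cos_abs_mul]
  rw [← apply_ite ((↑) : ℝ → ℂ), ← Complex.ofReal_mul, ite_abs_eq_zero_mul_self]

/-- closed form of the fractional Clifford–Fourier kernel in dimension 2:
`e^{iβΓ_y}(e^{-i⟨x,y⟩/sin α}) = [cos(t sin β/sin α) + (x∧y) sin(t sin β/sin α)/t]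
  e^{-i⟨x,y⟩ cos β/sin α}` with `t = |x∧y| = √(|x|²|y|² - ⟨x,y⟩²)` (the second coefficient
interpreted as `sin β / sin α` when `t = 0`). -/
theorem fracCFT_kernel_dim_two {A : Type*} [NormedRing A] [NormedAlgebra ℂ A]
    [CompleteSpace A] (e : Fin 2 → A)
    (he : ∀ i j : Fin 2, e i * e j + e j * e i = if i = j then (-2 : ℂ) • (1 : A) else 0)
    (α β : ℝ) (hα : α ∈ Set.Ioo 0 Real.pi) (x y : EuclideanSpace ℝ (Fin 2)) :
    gamExp e β (fun z => Complex.exp (-Complex.I *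
        ((x 0 * z 0 + x 1 * z 1 : ℝ) : ℂ) / (Real.sin α : ℂ)) • (1 : A)) y =
      Complex.exp (-Complex.I * ((x 0 * y 0 + x 1 * y 1 : ℝ) : ℂ) * (Real.cos β : ℂ) /
          (Real.sin α : ℂ)) •
        ((Real.cos (Real.sqrt ((x 0 ^ 2 + x 1 ^ 2) * (y 0 ^ 2 + y 1 ^ 2) -
              (x 0 * y 0 + x 1 * y 1) ^ 2) * Real.sin β / Real.sin α) : ℂ) • (1 : A) +
          (if Real.sqrt ((x 0 ^ 2 + x 1 ^ 2) * (y 0 ^ 2 + y 1 ^ 2) -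
                (x 0 * y 0 + x 1 * y 1) ^ 2) = 0 then
              ((Real.sin β / Real.sin α : ℝ) : ℂ)
            else ((Real.sin (Real.sqrt ((x 0 ^ 2 + x 1 ^ 2) * (y 0 ^ 2 + y 1 ^ 2) -
                  (x 0 * y 0 + x 1 * y 1) ^ 2) * Real.sin β / Real.sin α) /
                Real.sqrt ((x 0 ^ 2 + x 1 ^ 2) * (y 0 ^ 2 + y 1 ^ 2) -
                  (x 0 * y 0 + x 1 * y 1) ^ 2) : ℝ) : ℂ)) •
            ((x 0 * y 1 - x 1 * y 0 : ℝ) • (e 0 * e 1))) :=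
  fracCFT_kernel_dim_two_general e he α β x y
end
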